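/- Let 0<b<1, σ₁,σ₂ ∈ ℝ, and for s∈(1/2,1) let α₂(s) := (C(s)s²/(4(1-s)))[σ₁ b^{1-2s} + σ₂ (1-b)^{1-2s}](1 + Γ(2s-1)Γ(3-2s)), where C(s)=2^{2s}sΓ(s+1/2)/(√π Γ(1-s)). Then α₂(s) → σ₁/b + σ₂/(1-b) as s → 1⁻, and moreover |α₂(s) - (σ₁/b + σ₂/(1-b))| ≲ 1-s for s close to 1. -/

import Mathlib

/-!
Since `Γ(2 - s) = (1 - s) Γ(1 - s)`, the factor `C(s) / (1 - s)` in `α₂` equals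
`2^{2s} s Γ(s + 1/2) / (√π Γ(2 - s))`, which is smooth across `s = 1` with value `2` there.
So `α₂` agrees on `s < 1` with a function differentiable at `1` whose value at `1` is
`σ₁/b + σ₂/(1-b)`; both the limit and the linear rate follow from differentiability.
-/

open MeasureTheory Set Real Filter Topology

noncomputable section

/-- Normalization constant of the 1D integral fractional Laplacian. -/
def Cs (s : ℝ) : ℝ :=
  (2:ℝ)^(2*s) * s * Real.Gamma (s + 1/2) / (Real.sqrt π * Real.Gamma (1 - s))

/-- The interior contribution `α₂(s)` of the Gagliardo energy of `φ^s`. -/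
def alpha2 (b σ₁ σ₂ : ℝ) (s : ℝ) : ℝ :=
  (Cs s * s^2 / (4 * (1 - s))) *
    (σ₁ * b ^ (1 - 2*s) + σ₂ * (1 - b) ^ (1 - 2*s)) *
    (1 + Real.Gamma (2*s - 1) * Real.Gamma (3 - 2*s))

def CsDivOneSub (s : ℝ) : ℝ :=
  (2:ℝ)^(2*s) * s * Gamma (s + 1/2) / (sqrt π * Gamma (2 - s))

def alpha2Reg (b σ₁ σ₂ : ℝ) (s : ℝ) : ℝ :=
  (CsDivOneSub s * s^2 / 4) *
    (σ₁ * b ^ (1 - 2*s) + σ₂ * (1 - b) ^ (1 - 2*s)) *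
    (1 + Gamma (2*s - 1) * Gamma (3 - 2*s))

theorem exists_Ioo_forall_of_eventually_nhdsLT {α : Type*} [LinearOrder α] [TopologicalSpace α]
    [OrderTopology α] [DenselyOrdered α] {a c : α} (hc : c < a) {P : α → Prop}
    (h : ∀ᶠ x in 𝓝[<] a, P x) : ∃ x₀ ∈ Ioo c a, ∀ x ∈ Ioo x₀ a, P x := by
  obtain ⟨l, hl, hsub⟩ := (mem_nhdsLT_iff_exists_Ioo_subset' hc).1 h
  obtain ⟨m, hcm, hma⟩ := exists_between hc
  refine ⟨max l m, ⟨hcm.trans_le (le_max_right l m), max_lt hl hma⟩, fun x hx => ?_⟩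
  exact hsub ⟨(le_max_left l m).trans_lt hx.1, hx.2⟩

theorem DifferentiableAt.exists_pos_abs_sub_le {f : ℝ → ℝ} {a : ℝ} (hf : DifferentiableAt ℝ f a) :
    ∃ C > 0, ∀ᶠ x in 𝓝 a, |f x - f a| ≤ C * |x - a| := by
  obtain ⟨C, hC, hO⟩ := hf.isBigO_sub.exists_pos
  exact ⟨C, hC, by simpa only [Real.norm_eq_abs] using hO.bound⟩

theorem Cs_div_one_sub {s : ℝ} (hs : s ≠ 1) : Cs s / (1 - s) = CsDivOneSub s := by
  have hΓ : Gamma (2 - s) = (1 - s) * Gamma (1 - s) := by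
    rw [← Gamma_add_one (sub_ne_zero.2 hs.symm)]
    ring_nf
  rw [Cs, CsDivOneSub, hΓ, div_div]
  ring_nf

theorem alpha2_eq_alpha2Reg (b σ₁ σ₂ : ℝ) {s : ℝ} (hs : s ≠ 1) :
    alpha2 b σ₁ σ₂ s = alpha2Reg b σ₁ σ₂ s := by
  rw [alpha2, alpha2Reg, ← Cs_div_one_sub hs, mul_comm 4, ← div_div, mul_div_right_comm (Cs s)]

theorem CsDivOneSub_one : CsDivOneSub 1 = 2 := by
  have hΓ : Gamma (1 + 1/2) = sqrt π / 2 := by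
    rw [show (1:ℝ) + 1/2 = 1/2 + 1 by norm_num, Gamma_add_one (by norm_num), Gamma_one_half_eq]
    ring
  rw [CsDivOneSub, hΓ, show (2:ℝ) - 1 = 1 by norm_num, Gamma_one,
    show (2:ℝ) * 1 = 2 by norm_num, rpow_two]
  field_simp

theorem alpha2Reg_one (b σ₁ σ₂ : ℝ) : alpha2Reg b σ₁ σ₂ 1 = σ₁ / b + σ₂ / (1 - b) := by
  rw [alpha2Reg, CsDivOneSub_one]
  norm_num [rpow_neg_one, Gamma_one]
  ring

theorem differentiableAt_alpha2Reg_one {b : ℝ} (hb₀ : b ≠ 0) (hb₁ : 1 - b ≠ 0) (σ₁ σ₂ : ℝ) :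
    DifferentiableAt ℝ (alpha2Reg b σ₁ σ₂) 1 := by
  have hden : sqrt π * Gamma (2 - 1) ≠ 0 := by
    norm_num [Gamma_one]
    positivity
  unfold alpha2Reg CsDivOneSub
  fun_prop (disch := first
    | assumption
    | exact fun m h => by linarith [(Nat.cast_nonneg m : (0:ℝ) ≤ m)]
    | norm_num)

/-- `α₂(s) → σ₁/b + σ₂/(1-b)` as `s → 1⁻`, with linear rate `O(1-s)`. -/
theorem stmt10 (b σ₁ σ₂ : ℝ) (hb : b ∈ Ioo (0:ℝ) 1) :
    Tendsto (alpha2 b σ₁ σ₂) (𝓝[<] (1:ℝ))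
      (𝓝 (σ₁ / b + σ₂ / (1 - b))) ∧
    ∃ C > 0, ∃ s₀ ∈ Ioo (1/2 : ℝ) 1, ∀ s ∈ Ioo s₀ 1,
      |alpha2 b σ₁ σ₂ s - (σ₁ / b + σ₂ / (1 - b))| ≤ C * (1 - s) := by
  obtain ⟨hb₀, hb₁⟩ := hb
  have hdiff := differentiableAt_alpha2Reg_one hb₀.ne' (sub_pos.2 hb₁).ne' σ₁ σ₂
  have heq : ∀ᶠ s in 𝓝[<] (1:ℝ), alpha2Reg b σ₁ σ₂ s = alpha2 b σ₁ σ₂ s :=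
    eventually_nhdsWithin_of_forall fun s hs => (alpha2_eq_alpha2Reg b σ₁ σ₂ hs.ne).symm
  rw [← alpha2Reg_one b σ₁ σ₂]
  refine ⟨hdiff.continuousAt.continuousWithinAt.tendsto.congr' heq, ?_⟩
  obtain ⟨C, hC, hbound⟩ := hdiff.exists_pos_abs_sub_le
  have hrate : ∀ᶠ s in 𝓝[<] (1:ℝ), |alpha2 b σ₁ σ₂ s - alpha2Reg b σ₁ σ₂ 1| ≤ C * (1 - s) := by
    filter_upwards [heq, nhdsWithin_le_nhds hbound, self_mem_nhdsWithin] with s hs hsC hs1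
    rwa [← hs, ← abs_of_pos (sub_pos.2 (show s < 1 from hs1)), abs_sub_comm 1]
  obtain ⟨s₀, hs₀, hP⟩ := exists_Ioo_forall_of_eventually_nhdsLT (by norm_num : (1/2:ℝ) < 1) hrate
  exact ⟨C, hC, s₀, hs₀, hP⟩

end
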